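/- arXiv:2602.22178 — 2 statements merged into one kernel-verified Lean document; each statement's English description precedes it below -/
import Mathlib

section
/- For all x ≥ 0 and ν ≥ 0, Γ₂(x, ν) ≤ Γ₂(x, 0) = 1 - exp(-x/2), i.e., the central chi-squared cdf with 2 degrees of freedom dominates the non-central one pointwise. -/
open MeasureTheory ProbabilityTheory Real Filter Set

/-- Modified Bessel function of the first kind, order 0. -/
noncomputable def besselI0 (z : ℝ) : ℝ :=
  ∑' k : ℕ, (z / 2) ^ (2 * k) / ((Nat.factorial k : ℝ)) ^ 2

/-- Density of the non-central chi-squared distribution with 2 degrees of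
freedom and noncentrality `ν`. -/
noncomputable def ncChi2Pdf (ν t : ℝ) : ℝ :=
  (1 / 2) * Real.exp (-(t + ν) / 2) * besselI0 (Real.sqrt (ν * t))

/-- Cdf `Γ₂ x ν` of the non-central chi-squared distribution with 2 degrees
of freedom and noncentrality `ν`. -/
noncomputable def Gamma2 (x ν : ℝ) : ℝ := ∫ t in (0:ℝ)..x, ncChi2Pdf ν t

/-!
Expanding `I₀` in its power series exhibits the non-central density as a Poisson(`ν/2`) mixture of
Gamma(`k + 1`, `1/2`) densities. The Gamma(`k + 1`, `1/2`) cdf is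
`1 - e^{-x/2} ∑_{j ≤ k} (x/2)^j / j!`, which is at most `1 - e^{-x/2}`, the `k = 0` (central) cdf;
averaging over the Poisson weights gives the inequality.
-/

open scoped Nat

/-- Density of the Gamma distribution with shape `k + 1` and rate `r`. -/
noncomputable def erlangPDF (r : ℝ) (k : ℕ) (t : ℝ) : ℝ :=
  r * exp (-(r * t)) * ((r * t) ^ k / k !)

theorem continuous_erlangPDF (r : ℝ) (k : ℕ) : Continuous (erlangPDF r k) := by
  unfold erlangPDF; fun_prop

theorem erlangPDF_nonneg {r : ℝ} (hr : 0 ≤ r) (k : ℕ) {t : ℝ} (ht : 0 ≤ t) : 0 ≤ erlangPDF r k t := by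
  unfold erlangPDF; positivity

theorem hasDerivAt_erlang_primitive (r : ℝ) (k : ℕ) (t : ℝ) :
    HasDerivAt (fun s ↦ -(exp (-(r * s)) * ∑ j ∈ Finset.range (k + 1), (r * s) ^ j / j !))
      (erlangPDF r k t) t := by
  have hexp : HasDerivAt (fun s ↦ exp (-(r * s))) (exp (-(r * t)) * -r) t := by
    simpa using ((hasDerivAt_id t).const_mul r).neg.exp
  induction k with
  | zero =>
    simpa [erlangPDF, mul_comm] using hexp.fun_neg
  | succ k ih =>
    have hpow : HasDerivAt (fun s ↦ (r * s) ^ (k + 1) / (k + 1)!)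
        ((k + 1) * (r * t) ^ k * r / (k + 1)!) t := by
      simpa using (((hasDerivAt_id t).const_mul r).pow (k + 1)).div_const ((k + 1)! : ℝ)
    have hsplit : (fun s ↦ -(exp (-(r * s)) * ∑ j ∈ Finset.range (k + 2), (r * s) ^ j / j !)) =
        fun s ↦ -(exp (-(r * s)) * ∑ j ∈ Finset.range (k + 1), (r * s) ^ j / j !) +
          -(exp (-(r * s)) * ((r * s) ^ (k + 1) / (k + 1)!)) := by
      ext s; rw [Finset.sum_range_succ]; ring
    rw [hsplit]
    refine (ih.add (hexp.fun_mul hpow).fun_neg).congr_deriv ?_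
    simp only [erlangPDF, Nat.factorial_succ, Nat.cast_mul, Nat.cast_succ]
    field_simp
    ring

theorem integral_erlangPDF (r : ℝ) (k : ℕ) (x : ℝ) :
    ∫ t in (0 : ℝ)..x, erlangPDF r k t =
      1 - exp (-(r * x)) * ∑ j ∈ Finset.range (k + 1), (r * x) ^ j / j ! := by
  have hpartial_zero : ∑ j ∈ Finset.range (k + 1), (r * 0) ^ j / j ! = 1 := by
    simp [Finset.sum_range_succ']
  rw [intervalIntegral.integral_eq_sub_of_hasDerivAt (fun t _ ↦ hasDerivAt_erlang_primitive r k t)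
    ((continuous_erlangPDF r k).intervalIntegrable 0 x), hpartial_zero, mul_zero, neg_zero, exp_zero]
  ring

theorem integral_erlangPDF_le {r : ℝ} (hr : 0 ≤ r) (k : ℕ) {x : ℝ} (hx : 0 ≤ x) :
    ∫ t in (0 : ℝ)..x, erlangPDF r k t ≤ 1 - exp (-(r * x)) := by
  have hpartial : 1 ≤ ∑ j ∈ Finset.range (k + 1), (r * x) ^ j / j ! := by
    simpa using Finset.single_le_sum (f := fun j ↦ (r * x) ^ j / j !)
      (fun j _ ↦ by positivity) (Finset.mem_range.2 k.succ_pos)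
  rw [integral_erlangPDF]
  nlinarith [exp_pos (-(r * x))]

theorem integral_erlangPDF_le_one {r : ℝ} (hr : 0 ≤ r) (k : ℕ) {x : ℝ} (hx : 0 ≤ x) :
    ∫ t in (0 : ℝ)..x, erlangPDF r k t ≤ 1 :=
  (integral_erlangPDF_le hr k hx).trans (sub_le_self _ (exp_pos _).le)

theorem integral_erlangPDF_nonneg {r : ℝ} (hr : 0 ≤ r) (k : ℕ) {x : ℝ} (hx : 0 ≤ x) :
    0 ≤ ∫ t in (0 : ℝ)..x, erlangPDF r k t :=
  intervalIntegral.integral_nonneg hx fun _ ht ↦ erlangPDF_nonneg hr k ht.1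

theorem integral_tsum_smul_of_integral_norm_le {ι α E : Type*} [Countable ι] [MeasurableSpace α]
    [NormedAddCommGroup E] [NormedSpace ℝ E] {μ : Measure α} {w : ι → ℝ} {f : ι → α → E}
    {C : ℝ} (hw : ∀ i, 0 ≤ w i) (hws : Summable w) (hf : ∀ i, Integrable (f i) μ)
    (hC : ∀ i, ∫ a, ‖f i a‖ ∂μ ≤ C) :
    ∫ a, ∑' i, w i • f i a ∂μ = ∑' i, w i • ∫ a, f i a ∂μ := by
  have hsum : Summable fun i ↦ ∫ a, ‖w i • f i a‖ ∂μ := by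
    refine .of_nonneg_of_le (fun i ↦ integral_nonneg fun _ ↦ norm_nonneg _) (fun i ↦ ?_)
      (hws.mul_right C)
    simp only [norm_smul, Real.norm_of_nonneg (hw i), integral_const_mul]
    exact mul_le_mul_of_nonneg_left (hC i) (hw i)
  simpa only [integral_smul] using (integral_tsum_of_summable_integral_norm
    (F := fun i a ↦ w i • f i a) (fun i ↦ (hf i).smul (w i)) hsum).symm

theorem besselI0_zero : besselI0 0 = 1 := by
  rw [besselI0, tsum_eq_single 0 fun k hk ↦ by simp [hk]]
  simp

theorem besselI0_sqrt {z : ℝ} (hz : 0 ≤ z) :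
    besselI0 (√z) = ∑' k : ℕ, (z / 4) ^ k / (k ! : ℝ) ^ 2 := by
  simp_rw [besselI0, pow_mul, div_pow, sq_sqrt hz]
  norm_num

theorem ncChi2Pdf_zero (t : ℝ) : ncChi2Pdf 0 t = erlangPDF (1 / 2) 0 t := by
  simp [ncChi2Pdf, erlangPDF, besselI0_zero, div_eq_inv_mul]

theorem ncChi2Pdf_eq_tsum {ν t : ℝ} (hν : 0 ≤ ν) (ht : 0 ≤ t) :
    ncChi2Pdf ν t = ∑' k : ℕ, (exp (-(ν / 2)) * (ν / 2) ^ k / k !) • erlangPDF (1 / 2) k t := by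
  rw [ncChi2Pdf, besselI0_sqrt (mul_nonneg hν ht), ← tsum_mul_left]
  congr 1 with k
  simp only [erlangPDF, smul_eq_mul]
  have hexp : exp (-(t + ν) / 2) = exp (-(ν / 2)) * exp (-(1 / 2 * t)) := by
    rw [← exp_add]; ring_nf
  rw [hexp, show ν * t / 4 = ν / 2 * (1 / 2 * t) by ring, mul_pow]
  field_simp

theorem Gamma2_zero (x : ℝ) : Gamma2 x 0 = 1 - exp (-x / 2) := by
  simp [Gamma2, ncChi2Pdf_zero, integral_erlangPDF, div_eq_inv_mul]

theorem Gamma2_eq_integral_poissonMeasure {x ν : ℝ} (hx : 0 ≤ x) (hν : 0 ≤ ν) :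
    Gamma2 x ν = ∫ k, (∫ t in (0 : ℝ)..x, erlangPDF (1 / 2) k t) ∂Po((ν / 2).toNNReal) := by
  have hrate : ((ν / 2).toNNReal : ℝ) = ν / 2 := Real.coe_toNNReal _ (by positivity)
  rw [integral_poissonMeasure, hrate, Gamma2, intervalIntegral.integral_of_le hx,
    setIntegral_congr_fun measurableSet_Ioc fun t ht ↦ ncChi2Pdf_eq_tsum hν ht.1.le]
  simp_rw [intervalIntegral.integral_of_le hx]
  refine integral_tsum_smul_of_integral_norm_le (C := 1) (fun k ↦ by positivity)
    (by simpa [hrate] using (hasSum_one_poissonMeasure (ν / 2).toNNReal).summable)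
    (fun k ↦ (continuous_erlangPDF _ k).integrableOn_Ioc) fun k ↦ ?_
  rw [setIntegral_congr_fun measurableSet_Ioc fun t ht ↦
    Real.norm_of_nonneg (erlangPDF_nonneg (by norm_num) k ht.1.le),
    ← intervalIntegral.integral_of_le hx]
  exact integral_erlangPDF_le_one (by norm_num) k hx

theorem stmt_8 :
    ∀ x : ℝ, 0 ≤ x → ∀ ν : ℝ, 0 ≤ ν →
      Gamma2 x ν ≤ Gamma2 x 0 ∧ Gamma2 x 0 = 1 - Real.exp (-x / 2) := by
  intro x hx ν hν
  refine ⟨?_, Gamma2_zero x⟩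
  have hcdf_le : ∀ k, ∫ t in (0 : ℝ)..x, erlangPDF (1 / 2) k t ≤ 1 - exp (-x / 2) := fun k ↦ by
    simpa [neg_div, div_eq_inv_mul] using integral_erlangPDF_le (by norm_num) k hx
  have hcdf_int : Integrable (fun k ↦ ∫ t in (0 : ℝ)..x, erlangPDF (1 / 2) k t)
      Po((ν / 2).toNNReal) := by
    refine .of_bound (C := 1) .of_discrete (ae_of_all _ fun k ↦ ?_)
    rw [Real.norm_of_nonneg (integral_erlangPDF_nonneg (by norm_num) k hx)]
    exact integral_erlangPDF_le_one (by norm_num) k hx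
  rw [Gamma2_eq_integral_poissonMeasure hx hν, Gamma2_zero]
  calc _ ≤ ∫ _k, (1 - exp (-x / 2)) ∂Po((ν / 2).toNNReal) :=
        integral_mono hcdf_int (integrable_const _) hcdf_le
    _ = 1 - exp (-x / 2) := by simp
end

section
/- The non-central chi-squared family with 2 degrees of freedom is stochastically increasing in the noncentrality parameter: if ν1 < ν2 then for all x > 0, Γ₂(x, ν2) < Γ₂(x, ν1). -/
open MeasureTheory ProbabilityTheory Real Filter Set

/-!
For `ν, t ≥ 0` the density is `½ e^{-(t+ν)/2} f(νt)` with `f(u) = I₀(√u) = ∑ (u/4)^k / k!²`,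
an entire power series solving `u f'' + f' = f / 4`. This equation makes the `ν`-derivative
of the density an exact `t`-derivative,
`∂_ν [½ e^{-(t+ν)/2} f(νt)] = ∂_t [-t e^{-(t+ν)/2} f'(νt)]`,
so differentiating under the integral sign gives `∂_ν Γ₂(x, ν) = -x e^{-(x+ν)/2} f'(νx)`,
which is negative because `f'` has positive coefficients.
-/

open Nat

noncomputable def powerSeriesFun (c : ℕ → ℝ) (u : ℝ) : ℝ := ∑' k, c k * u ^ k

def derivCoeff (c : ℕ → ℝ) (k : ℕ) : ℝ := (k + 1) * c (k + 1)

section FactorialBound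

variable {c : ℕ → ℝ}

lemma powerSeriesFun_eq_add_mul {u : ℝ} (hs : Summable fun k => c k * u ^ k) :
    powerSeriesFun c u = c 0 + u * powerSeriesFun (fun k => c (k + 1)) u := by
  rw [powerSeriesFun, hs.tsum_eq_zero_add, powerSeriesFun, ← tsum_mul_left]
  simp only [pow_zero, mul_one, pow_succ]
  congr 1
  exact tsum_congr fun k => by ring

variable (hc : ∀ k, |c k| ≤ (k ! : ℝ)⁻¹)
include hc

lemma abs_derivCoeff_le (k : ℕ) : |derivCoeff c k| ≤ (k ! : ℝ)⁻¹ := by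
  have hk : (0 : ℝ) < k + 1 := by positivity
  calc |derivCoeff c k| = (k + 1) * |c (k + 1)| := by
        rw [derivCoeff, abs_mul, abs_of_pos hk]
    _ ≤ (k + 1) * ((k + 1)! : ℝ)⁻¹ := by gcongr; exact hc (k + 1)
    _ = (k ! : ℝ)⁻¹ := by rw [factorial_succ]; push_cast; field_simp

lemma summable_abs_mul_pow (r : ℝ) : Summable fun k => |c k| * |r| ^ k := by
  refine .of_nonneg_of_le (fun k => by positivity) (fun k => ?_)
    (Real.summable_pow_div_factorial |r|)
  rw [div_eq_inv_mul]
  gcongr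
  exact hc k

lemma summable_mul_pow (u : ℝ) : Summable fun k => c k * u ^ k :=
  .of_norm (by simpa only [norm_mul, norm_pow, Real.norm_eq_abs] using summable_abs_mul_pow hc u)

lemma hasDerivAt_powerSeriesFun (u : ℝ) :
    HasDerivAt (powerSeriesFun c) (powerSeriesFun (derivCoeff c) u) u := by
  set R := |u| + 1
  have hR : 0 < R := by positivity
  have hbound : Summable fun k : ℕ => |c k| * (k * R ^ (k - 1)) := by
    rw [← summable_nat_add_iff 1]
    refine (summable_abs_mul_pow (abs_derivCoeff_le hc) R).congr fun k => ?_
    rw [derivCoeff, abs_mul, abs_of_pos hR, abs_of_pos (by positivity : (0 : ℝ) < k + 1)]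
    push_cast
    ring
  have hderiv := hasDerivAt_tsum_of_isPreconnected hbound Metric.isOpen_ball
    (convex_ball (0 : ℝ) R).isPreconnected
    (fun k y _ => (hasDerivAt_pow k y).const_mul (c k)) (fun k y hy => ?_)
    (Metric.mem_ball_self hR) (summable_mul_pow hc 0)
    (by rw [mem_ball_zero_iff, Real.norm_eq_abs]; linarith)
  · have hseries : ∑' k : ℕ, c k * (k * u ^ (k - 1)) = powerSeriesFun (derivCoeff c) u := by
      rw [tsum_eq_zero_add' ?_]
      · simp only [CharP.cast_eq_zero, zero_mul, mul_zero, zero_add, powerSeriesFun, derivCoeff]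
        exact tsum_congr fun k => by push_cast; ring
      · refine (summable_mul_pow (abs_derivCoeff_le hc) u).congr fun k => ?_
        simp only [derivCoeff, add_tsub_cancel_right]
        push_cast
        ring
    rw [hseries] at hderiv
    exact hderiv
  · rw [mem_ball_zero_iff, Real.norm_eq_abs] at hy
    rw [Real.norm_eq_abs, abs_mul, abs_mul, Nat.abs_cast, abs_pow]
    gcongr

lemma continuous_powerSeriesFun : Continuous (powerSeriesFun c) :=
  continuous_iff_continuousAt.2 fun u => (hasDerivAt_powerSeriesFun hc u).continuousAt

lemma powerSeriesFun_pos (hnonneg : ∀ k, 0 ≤ c k) (h0 : 0 < c 0) {u : ℝ} (hu : 0 ≤ u) :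
    0 < powerSeriesFun c u :=
  (summable_mul_pow hc u).tsum_pos (fun k => mul_nonneg (hnonneg k) (by positivity)) 0
    (by simpa using h0)

end FactorialBound

noncomputable def besselCoeff (k : ℕ) : ℝ := (4 ^ k * (k ! : ℝ) ^ 2)⁻¹

lemma abs_besselCoeff_le (k : ℕ) : |besselCoeff k| ≤ (k ! : ℝ)⁻¹ := by
  have hk : (1 : ℝ) ≤ k ! := by exact_mod_cast k.factorial_pos
  rw [besselCoeff, abs_of_pos (by positivity)]
  gcongr
  calc (k ! : ℝ) = 1 * 1 * k ! := by ring
    _ ≤ 4 ^ k * k ! * k ! := by gcongr; exact one_le_pow₀ (by norm_num)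
    _ = 4 ^ k * (k ! : ℝ) ^ 2 := by ring

lemma besselI0_sqrt_s12 {u : ℝ} (hu : 0 ≤ u) : besselI0 (√u) = powerSeriesFun besselCoeff u := by
  refine tsum_congr fun k => ?_
  rw [pow_mul, div_pow, sq_sqrt hu, besselCoeff, div_pow]
  field_simp
  norm_num

lemma besselCoeff_ode (k : ℕ) :
    derivCoeff (derivCoeff besselCoeff) k + derivCoeff besselCoeff (k + 1)
      = besselCoeff (k + 1) / 4 := by
  simp only [derivCoeff, besselCoeff, factorial_succ]
  push_cast
  field_simp
  ring

lemma powerSeriesFun_besselCoeff_ode (u : ℝ) :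
    u * powerSeriesFun (derivCoeff (derivCoeff besselCoeff)) u
        + powerSeriesFun (derivCoeff besselCoeff) u
      = powerSeriesFun besselCoeff u / 4 := by
  have hf := abs_besselCoeff_le
  have hg := abs_derivCoeff_le hf
  have hh := abs_derivCoeff_le hg
  have hshift : powerSeriesFun (derivCoeff (derivCoeff besselCoeff)) u
      + powerSeriesFun (fun k => derivCoeff besselCoeff (k + 1)) u
      = powerSeriesFun (fun k => besselCoeff (k + 1)) u / 4 := by
    simp only [powerSeriesFun]
    have hg_succ (k : ℕ) : |derivCoeff besselCoeff (k + 1)| ≤ (k ! : ℝ)⁻¹ :=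
      (hg (k + 1)).trans (by gcongr; exact k.le_succ)
    rw [← (summable_mul_pow hh u).tsum_add (summable_mul_pow hg_succ u), ← tsum_div_const]
    exact tsum_congr fun k => by rw [← add_mul, besselCoeff_ode]; ring
  have hconst : derivCoeff besselCoeff 0 = besselCoeff 0 / 4 := by
    norm_num [derivCoeff, besselCoeff]
  rw [powerSeriesFun_eq_add_mul (summable_mul_pow hg u),
    powerSeriesFun_eq_add_mul (summable_mul_pow hf u), hconst]
  linear_combination u * hshift

lemma hasDerivAt_intervalIntegral_of_continuous {E : Type*} [NormedAddCommGroup E]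
    [NormedSpace ℝ E] {F F' : ℝ → ℝ → E} (hF : Continuous (Function.uncurry F))
    (hF' : Continuous (Function.uncurry F')) (hderiv : ∀ ν t, HasDerivAt (F · t) (F' ν t) ν)
    (a b ν₀ : ℝ) :
    HasDerivAt (fun ν => ∫ t in a..b, F ν t) (∫ t in a..b, F' ν₀ t) ν₀ := by
  obtain ⟨K, hK⟩ := ((isCompact_closedBall ν₀ 1).prod (isCompact_uIcc (a := a) (b := b))
    ).exists_bound_of_continuousOn hF'.continuousOn
  have hFν (ν : ℝ) : Continuous (F ν) := hF.comp (Continuous.prodMk_right ν)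
  have hF'ν₀ : Continuous (F' ν₀) := hF'.comp (Continuous.prodMk_right ν₀)
  exact (intervalIntegral.hasDerivAt_integral_of_dominated_loc_of_deriv_le (bound := fun _ => K)
    (Metric.closedBall_mem_nhds ν₀ one_pos)
    (Eventually.of_forall fun ν => (hFν ν).aestronglyMeasurable)
    ((hFν ν₀).intervalIntegrable a b) hF'ν₀.aestronglyMeasurable
    (Eventually.of_forall fun t ht ν hν => hK (ν, t) ⟨hν, uIoc_subset_uIcc ht⟩)
    intervalIntegrable_const (Eventually.of_forall fun t _ ν _ => hderiv ν t)).2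

/-- Agrees with `ncChi2Pdf ν t` when `0 ≤ ν * t`, where `√(ν * t)` is not a junk value. -/
noncomputable def ncChi2PdfSeries (ν t : ℝ) : ℝ :=
  (1 / 2) * exp (-(t + ν) / 2) * powerSeriesFun besselCoeff (ν * t)

noncomputable def ncChi2PdfSeriesDerivParam (ν t : ℝ) : ℝ :=
  exp (-(t + ν) / 2) * (-(1 / 4) * powerSeriesFun besselCoeff (ν * t)
    + t / 2 * powerSeriesFun (derivCoeff besselCoeff) (ν * t))

lemma continuous_uncurry_ncChi2PdfSeries : Continuous (Function.uncurry ncChi2PdfSeries) := by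
  have := continuous_powerSeriesFun abs_besselCoeff_le
  unfold ncChi2PdfSeries
  fun_prop

lemma continuous_uncurry_ncChi2PdfSeriesDerivParam :
    Continuous (Function.uncurry ncChi2PdfSeriesDerivParam) := by
  have := continuous_powerSeriesFun abs_besselCoeff_le
  have := continuous_powerSeriesFun (abs_derivCoeff_le abs_besselCoeff_le)
  unfold ncChi2PdfSeriesDerivParam
  fun_prop

lemma hasDerivAt_ncChi2PdfSeries_param (ν t : ℝ) :
    HasDerivAt (ncChi2PdfSeries · t) (ncChi2PdfSeriesDerivParam ν t) ν := by
  have hexp : HasDerivAt (fun ν => exp (-(t + ν) / 2)) (exp (-(t + ν) / 2) * (-1 / 2)) ν :=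
    (((hasDerivAt_id ν).const_add t).neg.div_const 2).exp
  have hf : HasDerivAt (fun ν => powerSeriesFun besselCoeff (ν * t))
      (powerSeriesFun (derivCoeff besselCoeff) (ν * t) * t) ν :=
    (hasDerivAt_powerSeriesFun abs_besselCoeff_le _).comp ν (hasDerivAt_mul_const t)
  refine ((hexp.const_mul (1 / 2)).mul hf).congr_deriv ?_
  simp only [ncChi2PdfSeriesDerivParam]
  ring

lemma hasDerivAt_ncChi2PdfSeriesDerivParam_primitive (ν t : ℝ) :
    HasDerivAt
      (fun t => -(t * exp (-(t + ν) / 2) * powerSeriesFun (derivCoeff besselCoeff) (ν * t)))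
      (ncChi2PdfSeriesDerivParam ν t) t := by
  have hexp : HasDerivAt (fun t => exp (-(t + ν) / 2)) (exp (-(t + ν) / 2) * (-1 / 2)) t :=
    (((hasDerivAt_id t).add_const ν).neg.div_const 2).exp
  have hg : HasDerivAt (fun t => powerSeriesFun (derivCoeff besselCoeff) (ν * t))
      (powerSeriesFun (derivCoeff (derivCoeff besselCoeff)) (ν * t) * ν) t :=
    (hasDerivAt_powerSeriesFun (abs_derivCoeff_le abs_besselCoeff_le) _).comp t
      (hasDerivAt_const_mul ν)
  refine (((hasDerivAt_id' t).mul hexp).mul hg).neg.congr_deriv ?_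
  simp only [ncChi2PdfSeriesDerivParam, Pi.mul_apply]
  linear_combination -exp (-(t + ν) / 2) * powerSeriesFun_besselCoeff_ode (ν * t)

lemma hasDerivAt_integral_ncChi2PdfSeries (x ν : ℝ) :
    HasDerivAt (fun ν => ∫ t in (0 : ℝ)..x, ncChi2PdfSeries ν t)
      (-(x * exp (-(x + ν) / 2) * powerSeriesFun (derivCoeff besselCoeff) (ν * x))) ν := by
  have hFTC := intervalIntegral.integral_eq_sub_of_hasDerivAt
    (fun t _ => hasDerivAt_ncChi2PdfSeriesDerivParam_primitive ν t)
    ((continuous_uncurry_ncChi2PdfSeriesDerivParam.comp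
      (Continuous.prodMk_right ν)).intervalIntegrable 0 x)
  simpa [hFTC] using hasDerivAt_intervalIntegral_of_continuous
    continuous_uncurry_ncChi2PdfSeries continuous_uncurry_ncChi2PdfSeriesDerivParam
    hasDerivAt_ncChi2PdfSeries_param 0 x ν

lemma strictAntiOn_integral_ncChi2PdfSeries {x : ℝ} (hx : 0 < x) :
    StrictAntiOn (fun ν => ∫ t in (0 : ℝ)..x, ncChi2PdfSeries ν t) (Ici 0) := by
  refine strictAntiOn_of_hasDerivWithinAt_neg (convex_Ici 0)
    (Differentiable.continuous fun ν =>
      (hasDerivAt_integral_ncChi2PdfSeries x ν).differentiableAt).continuousOn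
    (fun ν _ => (hasDerivAt_integral_ncChi2PdfSeries x ν).hasDerivWithinAt) fun ν hν => ?_
  rw [interior_Ici, mem_Ioi] at hν
  have hg : 0 < powerSeriesFun (derivCoeff besselCoeff) (ν * x) :=
    powerSeriesFun_pos (abs_derivCoeff_le abs_besselCoeff_le)
      (fun k => by unfold derivCoeff besselCoeff; positivity)
      (by norm_num [derivCoeff, besselCoeff])
      (by positivity)
  simp only [neg_lt_zero]
  positivity

lemma gamma2_eq_integral_ncChi2PdfSeries {x ν : ℝ} (hx : 0 ≤ x) (hν : 0 ≤ ν) :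
    Gamma2 x ν = ∫ t in (0 : ℝ)..x, ncChi2PdfSeries ν t := by
  refine intervalIntegral.integral_congr fun t ht => ?_
  rw [uIcc_of_le hx] at ht
  rw [ncChi2Pdf, ncChi2PdfSeries, besselI0_sqrt_s12 (mul_nonneg hν ht.1)]

theorem stmt_12 (ν₁ ν₂ : ℝ) (hν₁ : 0 ≤ ν₁) (h : ν₁ < ν₂) :
    ∀ x : ℝ, 0 < x → Gamma2 x ν₂ < Gamma2 x ν₁ := by
  intro x hx
  have hν₂ : 0 ≤ ν₂ := hν₁.trans h.le
  rw [gamma2_eq_integral_ncChi2PdfSeries hx.le hν₁,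
    gamma2_eq_integral_ncChi2PdfSeries hx.le hν₂]
  exact strictAntiOn_integral_ncChi2PdfSeries hx hν₁ hν₂ h
end
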